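/- Let κ be a regular uncountable cardinal. Then the stationary splitting number s^cl_κ is strictly greater than κ if and only if κ is ineffable. -/

import Mathlib

open Set Cardinal

/-- `c` is a club in the well-ordered type `α` (thought of as the cardinal `κ = #α`):
it is closed (contains the supremum of each of its nonempty bounded subsets) and unbounded. -/
def IsClubIn {α : Type*} [LinearOrder α] (c : Set α) : Prop :=
  (∀ s ⊆ c, s.Nonempty → ∀ a : α, IsLUB s a → a ∈ c) ∧ ∀ a : α, ∃ b ∈ c, a < b

/-- `x` is stationary: it meets every club. -/
def IsStatIn {α : Type*} [LinearOrder α] (x : Set α) : Prop :=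
  ∀ c : Set α, IsClubIn c → (x ∩ c).Nonempty

/-- `y` stationarily splits `x`: both `x ∩ y` and `x \ y` are stationary. -/
def StatSplits {α : Type*} [LinearOrder α] (y x : Set α) : Prop :=
  IsStatIn (x ∩ y) ∧ IsStatIn (x \ y)

/-- The stationary splitting number `s^cl_κ`: the least cardinality of a family `S` of
stationary sets such that every stationary set is stationarily split by a member of `S`. -/
noncomputable def statSplittingNumber (α : Type*) [LinearOrder α] : Cardinal :=
  sInf { c : Cardinal | ∃ S : Set (Set α), (∀ y ∈ S, IsStatIn y) ∧
    (∀ x : Set α, IsStatIn x → ∃ y ∈ S, StatSplits y x) ∧ c = #S }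

/-- `κ` is ineffable: for every partition `f` of the two-element subsets `{i, j}` (`i < j`)
of `κ` into two pieces there is a stationary homogeneous set. -/
def Ineffable (α : Type*) [LinearOrder α] : Prop :=
  ∀ f : α → α → Bool, ∃ x : Set α, IsStatIn x ∧
    ∃ c : Bool, ∀ i ∈ x, ∀ j ∈ x, i < j → f i j = c

/-!
Solovay: every stationary `x ⊆ κ` splits. If none did, every regressive function would be
constant on `x` modulo a nonstationary set, and by a diagonal intersection a `κ`-sequence of
them would be so simultaneously. Taking `β` least in `x ∩ acc C` shows that stationarily many
`β ∈ x` carry a cofinal `L_β ⊆ β` whose accumulation points avoid `x`; pressing down the points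
of `L_β` above each `b` gives a function `g`, and a closure point `α ∈ x` of `g` is an
accumulation point of `L_β` for large `β`. So the stationary sets form a splitting family and
the infimum defining the splitting number is attained.

If `f` has no stationary homogeneous set, the `κ` sets `{a > b | f b a}` form a splitting
family: a stationary set split by none of them is homogeneous modulo a club. If `κ` is
ineffable, homogeneity for the lexicographic colouring and Fodor's lemma applied to first
differences give a stationary coherent set for every sequence `S a ⊆ a`; for
`S a = {i < a | a ∈ g i}`, with `g` enumerating `κ` candidate splitters, the stationary set on
which `A` coheres is split by no `g i`.
-/

universe u v

section

variable {γ : Type u} [LinearOrder γ]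

/-- The well-order `γ` represents a regular uncountable cardinal `κ = #γ`; the last field says
that its order type is the initial ordinal of `κ`. -/
structure IsRegularUncountable (γ : Type u) [LinearOrder γ] : Prop where
  isRegular : (#γ).IsRegular
  aleph0_lt : ℵ₀ < #γ
  mk_Iio_lt : ∀ a : γ, #(Iio a) < #γ

namespace IsRegularUncountable

variable (hγ : IsRegularUncountable γ)
include hγ

theorem mk_Iic_lt (a : γ) : #(Iic a) < #γ := by
  rw [← Iio_insert]
  exact mk_insert_le.trans_lt
    (add_lt_of_lt hγ.aleph0_lt.le (hγ.mk_Iio_lt a) (one_lt_aleph0.trans hγ.aleph0_lt))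

theorem exists_forall_lt_of_mk_lt {s : Set γ} (hs : #s < #γ) : ∃ b, ∀ c ∈ s, c < b := by
  by_contra! h
  have hcover : (univ : Set γ) ⊆ ⋃ c : s, Iic (c : γ) := fun b _ => by
    obtain ⟨c, hc, hbc⟩ := h b
    exact mem_iUnion.2 ⟨⟨c, hc⟩, hbc⟩
  have hle : #γ ≤ sum fun c : s => #(Iic (c : γ)) :=
    mk_univ.ge.trans ((mk_le_mk_of_subset hcover).trans mk_iUnion_le_sum_mk)
  exact hle.not_gt (sum_lt_of_isRegular hγ.isRegular hs fun c => hγ.mk_Iic_lt c)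

theorem exists_forall_lt {ι : Type v} (hι : lift.{u} #ι < lift.{v} #γ) (f : ι → γ) :
    ∃ b, ∀ i, f i < b := by
  obtain ⟨b, hb⟩ := hγ.exists_forall_lt_of_mk_lt (lift_lt.1 (mk_range_le_lift.trans_lt hι))
  exact ⟨b, fun i => hb _ ⟨i, rfl⟩⟩

theorem exists_gt (a : γ) : ∃ b, a < b :=
  (hγ.exists_forall_lt (ι := PUnit.{1}) (by simpa using one_lt_aleph0.trans hγ.aleph0_lt)
    fun _ => a).imp fun _ hb => hb ⟨⟩

theorem exists_gt_forall_lt_exists_le_lt [WellFoundedLT γ] (f : γ → γ) (a₀ : γ) :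
    ∃ a, a₀ < a ∧ ∀ b < a, ∃ c, b ≤ c ∧ f c < a := by
  obtain ⟨u, hu⟩ := hγ.exists_forall_lt (ι := ℕ) (by simpa using hγ.aleph0_lt) (f^[·] a₀)
  obtain ⟨a, ha, hmin⟩ := wellFounded_lt.has_min {a | ∀ n, f^[n] a₀ < a} ⟨u, hu⟩
  refine ⟨a, ha 0, fun b hb => ?_⟩
  obtain ⟨n, hn⟩ : ∃ n, b ≤ f^[n] a₀ := by
    by_contra! h
    exact hmin b h hb
  exact ⟨_, hn, by simpa only [Function.iterate_succ_apply'] using ha (n + 1)⟩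

end IsRegularUncountable

def accPts (s : Set γ) : Set γ :=
  {a | (∃ b, b < a) ∧ ∀ b < a, ∃ d ∈ s, b < d ∧ d < a}

theorem accPts_mono {s t : Set γ} (hst : s ⊆ t) : accPts s ⊆ accPts t :=
  fun _ ha => ⟨ha.1, fun b hb => (ha.2 b hb).imp fun _ hd => ⟨hst hd.1, hd.2⟩⟩

theorem accPts_accPts_subset (s : Set γ) : accPts (accPts s) ⊆ accPts s := fun _ ha =>
  ⟨ha.1, fun b hb => by
    obtain ⟨d, hd, hbd, hda⟩ := ha.2 b hb
    obtain ⟨e, he, hbe, hed⟩ := hd.2 b hbd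
    exact ⟨e, he, hbe, hed.trans hda⟩⟩

theorem mem_accPts_of_inter_Ioi_subset {s t : Set γ} {a i : γ} (ha : a ∈ accPts s)
    (hi : i < a) (hst : s ∩ Ioi i ⊆ t) : a ∈ accPts t :=
  ⟨ha.1, fun b hb => by
    obtain ⟨d, hd, hbd, hda⟩ := ha.2 (max b i) (max_lt hb hi)
    exact ⟨d, hst ⟨hd, (le_max_right b i).trans_lt hbd⟩, (le_max_left b i).trans_lt hbd,
      hda⟩⟩

theorem mem_accPts_of_forall_exists_le_lt {f : γ → γ} {C : Set γ} {a i : γ} (hi : i < a)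
    (ha : ∀ b < a, ∃ c, b ≤ c ∧ f c < a) (hC : ∀ c, i ≤ c → ∃ d ∈ C, c < d ∧ d ≤ f c) :
    a ∈ accPts C :=
  ⟨⟨i, hi⟩, fun b hb => by
    obtain ⟨c, hbc, hca⟩ := ha (max b i) (max_lt hb hi)
    obtain ⟨d, hd, hcd, hdc⟩ := hC c ((le_max_right b i).trans hbc)
    exact ⟨d, hd, ((le_max_left b i).trans hbc).trans_lt hcd, hdc.trans_lt hca⟩⟩

theorem IsLUB.mem_or_mem_accPts {s : Set γ} {a : γ} (ha : IsLUB s a) (hs : s.Nonempty) :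
    a ∈ s ∨ a ∈ accPts s := by
  by_cases has : a ∈ s
  · exact .inl has
  obtain ⟨c, hc⟩ := hs
  exact .inr ⟨⟨c, (ha.1 hc).lt_of_ne (ne_of_mem_of_not_mem hc has)⟩, fun b hb =>
    (ha.exists_between' has hb).imp fun _ hd => ⟨hd.1, hd.2⟩⟩

theorem IsClubIn.mem_of_mem_accPts {c : Set γ} {a : γ} (hc : IsClubIn c) (ha : a ∈ accPts c) :
    a ∈ c := by
  obtain ⟨b, hb⟩ := ha.1
  obtain ⟨d, hdc, -, hda⟩ := ha.2 b hb
  refine hc.1 (c ∩ Iio a) inter_subset_left ⟨d, hdc, hda⟩ a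
    ⟨fun e he => he.2.le, fun u hu => ?_⟩
  by_contra! hua
  obtain ⟨e, hec, hue, hea⟩ := ha.2 u hua
  exact hue.not_ge (hu ⟨hec, hea⟩)

theorem isClubIn_iff {c : Set γ} : IsClubIn c ↔ accPts c ⊆ c ∧ ∀ a, ∃ b ∈ c, a < b := by
  refine ⟨fun hc => ⟨fun _ => hc.mem_of_mem_accPts, hc.2⟩, fun ⟨hacc, hunb⟩ =>
    ⟨fun s hs hne a ha => ?_, hunb⟩⟩
  rcases ha.mem_or_mem_accPts hne with h | h
  exacts [hs h, hacc (accPts_mono hs h)]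

def diagInter (C : γ → Set γ) : Set γ :=
  {a | ∀ i < a, a ∈ C i}

theorem not_isStatIn_iff {x : Set γ} : ¬ IsStatIn x ↔ ∃ c, IsClubIn c ∧ Disjoint x c := by
  simp only [IsStatIn, not_forall, exists_prop, not_nonempty_iff_eq_empty,
    disjoint_iff_inter_eq_empty]

theorem IsStatIn.mono {x y : Set γ} (hx : IsStatIn x) (hxy : x ⊆ y) : IsStatIn y :=
  fun c hc => (hx c hc).mono (inter_subset_inter_left c hxy)

theorem exists_isClubIn_of_not_statSplits {x y : Set γ} (h : ¬ StatSplits y x) :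
    ∃ C, IsClubIn C ∧ ∃ v : Bool, ∀ j ∈ x ∩ C, j ∈ y ↔ v = true := by
  rcases not_and_or.1 h with h | h <;> obtain ⟨C, hC, hdisj⟩ := not_isStatIn_iff.1 h
  · exact ⟨C, hC, false, fun j hj =>
      iff_of_false (fun hjy => disjoint_left.1 hdisj ⟨hj.1, hjy⟩ hj.2) Bool.false_ne_true⟩
  · exact ⟨C, hC, true, fun j hj =>
      iff_of_true (by_contra fun hjy => disjoint_left.1 hdisj ⟨hj.1, hjy⟩ hj.2) rfl⟩

section Clubs

variable (hγ : IsRegularUncountable γ)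
include hγ

theorem isClubIn_univ : IsClubIn (univ : Set γ) :=
  isClubIn_iff.2 ⟨subset_univ _, fun a => (hγ.exists_gt a).imp fun _ hb => ⟨trivial, hb⟩⟩

theorem isClubIn_Ioi (a : γ) : IsClubIn (Ioi a) := by
  refine isClubIn_iff.2 ⟨fun α hα => ?_, fun b => ?_⟩
  · obtain ⟨b, hb⟩ := hα.1
    obtain ⟨d, hd, -, hdα⟩ := hα.2 b hb
    exact lt_trans hd hdα
  · obtain ⟨d, hd⟩ := hγ.exists_gt (max a b)
    exact ⟨d, (le_max_left a b).trans_lt hd, (le_max_right a b).trans_lt hd⟩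

theorem IsStatIn.nonempty {x : Set γ} (hx : IsStatIn x) : x.Nonempty := by
  simpa using hx univ (isClubIn_univ hγ)

theorem IsStatIn.exists_gt {x : Set γ} (hx : IsStatIn x) (a : γ) : ∃ b ∈ x, a < b :=
  hx _ (isClubIn_Ioi hγ a)

theorem not_isStatIn_of_subset_Iic {x : Set γ} {b : γ} (hx : x ⊆ Iic b) : ¬ IsStatIn x :=
  fun h => by
    obtain ⟨a, hax, hba⟩ := h.exists_gt hγ b
    exact (hx hax).not_gt hba

variable [WellFoundedLT γ]

theorem isClubIn_accPts {s : Set γ} (hs : ∀ a, ∃ b ∈ s, a < b) : IsClubIn (accPts s) := by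
  choose nx hnx hlt using hs
  refine isClubIn_iff.2 ⟨accPts_accPts_subset s, fun a₀ => ?_⟩
  obtain ⟨a, ha₀, ha⟩ := hγ.exists_gt_forall_lt_exists_le_lt nx a₀
  exact ⟨a, mem_accPts_of_forall_exists_le_lt ha₀ ha fun c _ => ⟨nx c, hnx c, hlt c, le_rfl⟩,
    ha₀⟩

theorem isClubIn_iInter {ι : Type v} (hι : lift.{u} #ι < lift.{v} #γ) {C : ι → Set γ}
    (hC : ∀ i, IsClubIn (C i)) : IsClubIn (⋂ i, C i) := by
  refine isClubIn_iff.2 ⟨fun a ha => mem_iInter.2 fun i =>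
    (hC i).mem_of_mem_accPts (accPts_mono (iInter_subset C i) ha), fun a₀ => ?_⟩
  choose nx hnx hlt using fun i => (hC i).2
  choose B hB using fun b => hγ.exists_forall_lt hι fun i => nx i b
  obtain ⟨a, ha₀, ha⟩ := hγ.exists_gt_forall_lt_exists_le_lt B a₀
  refine ⟨a, mem_iInter.2 fun i => (hC i).mem_of_mem_accPts ?_, ha₀⟩
  exact mem_accPts_of_forall_exists_le_lt ha₀ ha fun c _ =>
    ⟨nx i c, hnx i c, hlt i c, (hB c i).le⟩

theorem IsClubIn.inter {c d : Set γ} (hc : IsClubIn c) (hd : IsClubIn d) :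
    IsClubIn (c ∩ d) := by
  rw [inter_eq_iInter]
  refine isClubIn_iInter hγ ?_ fun b => by cases b <;> assumption
  simpa using (natCast_lt_aleph0 (n := 2)).trans hγ.aleph0_lt

theorem isClubIn_diagInter {C : γ → Set γ} (hC : ∀ i, IsClubIn (C i)) :
    IsClubIn (diagInter C) := by
  refine isClubIn_iff.2 ⟨fun a ha i hi => (hC i).mem_of_mem_accPts
    (mem_accPts_of_inter_Ioi_subset ha hi fun d hd => hd.1 i hd.2), fun a₀ => ?_⟩
  have hstep : ∀ b, ∃ d, b < d ∧ ∀ i ≤ b, d ∈ C i := fun b => by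
    obtain ⟨d, hd, hbd⟩ := (isClubIn_iInter hγ (lift_lt.2 (hγ.mk_Iic_lt b))
      fun i : Iic b => hC i).2 b
    exact ⟨d, hbd, fun i hi => mem_iInter.1 hd ⟨i, hi⟩⟩
  choose f hlt hf using hstep
  obtain ⟨a, ha₀, ha⟩ := hγ.exists_gt_forall_lt_exists_le_lt f a₀
  exact ⟨a, fun i hi => (hC i).mem_of_mem_accPts <| mem_accPts_of_forall_exists_le_lt hi ha
    fun c hic => ⟨f c, hf c i hic, hlt c, le_rfl⟩, ha₀⟩

theorem IsStatIn.inter_club {x c : Set γ} (hx : IsStatIn x) (hc : IsClubIn c) :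
    IsStatIn (x ∩ c) := fun d hd => by
  obtain ⟨a, hax, hac, had⟩ := hx _ (hc.inter hγ hd)
  exact ⟨a, ⟨hax, hac⟩, had⟩

theorem IsStatIn.inter_or_sdiff {x : Set γ} (hx : IsStatIn x) (y : Set γ) :
    IsStatIn (x ∩ y) ∨ IsStatIn (x \ y) := by
  by_contra! h
  obtain ⟨c, hc, hxc⟩ := not_isStatIn_iff.1 h.1
  obtain ⟨d, hd, hxd⟩ := not_isStatIn_iff.1 h.2
  obtain ⟨a, hax, hac, had⟩ := hx _ (hc.inter hγ hd)
  by_cases hay : a ∈ y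
  exacts [disjoint_left.1 hxc ⟨hax, hay⟩ hac, disjoint_left.1 hxd ⟨hax, hay⟩ had]

theorem not_isStatIn_diagUnion {N : γ → Set γ} (hN : ∀ i, ¬ IsStatIn (N i)) :
    ¬ IsStatIn {a | ∃ i < a, a ∈ N i} := by
  choose C hC hNC using fun i => not_isStatIn_iff.1 (hN i)
  refine not_isStatIn_iff.2 ⟨diagInter C, isClubIn_diagInter hγ hC, disjoint_left.2 ?_⟩
  rintro a ⟨i, hia, haN⟩ haC
  exact disjoint_left.1 (hNC i) haN (haC i hia)

/-- Fodor's pressing-down lemma. -/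
theorem IsStatIn.exists_isStatIn_fiber {T : Set γ} (hT : IsStatIn T) {f : γ → γ}
    (hf : ∀ a ∈ T, f a < a) : ∃ c, IsStatIn {a ∈ T | f a = c} := by
  by_contra! h
  exact not_isStatIn_diagUnion hγ h (hT.mono fun a ha => ⟨f a, hf a ha, ha, rfl⟩)

end Clubs

/-- When `β` has uncountable cofinality this says that `x ∩ β` is not stationary in `β` (take
`L` a club); when `β` has countable cofinality it always holds (take `L` an `ω`-sequence). -/
def NonReflectingAt (x : Set γ) (β : γ) : Prop :=
  ∃ L ⊆ Iio β, (∀ b < β, ∃ d ∈ L, b < d) ∧ ∀ α ∈ x, α < β → α ∉ accPts L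

section Solovay

variable [WellFoundedLT γ] (hγ : IsRegularUncountable γ)
include hγ

theorem exists_isClubIn_forall_eq_of_forall_not_statSplits {x T : Set γ}
    (hx : ∀ y, ¬ StatSplits y x) (hTx : T ⊆ x) (hT : IsStatIn T) (G : γ → γ → γ)
    (hG : ∀ β ∈ T, ∀ b < β, G β b < β) :
    ∃ g : γ → γ, ∃ D, IsClubIn D ∧ ∀ β ∈ T ∩ D, ∀ b < β, G β b = g b := by
  have hfiber : ∀ b, ∃ c, ¬ IsStatIn {β ∈ T | b < β ∧ G β b ≠ c} := fun b => by
    obtain ⟨c, hc⟩ := (hT.inter_club hγ (isClubIn_Ioi hγ b)).exists_isStatIn_fiber hγ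
      (f := fun β => G β b) fun β hβ => hG β hβ.1 b hβ.2
    exact ⟨c, fun h => hx _ ⟨hc.mono fun β hβ => ⟨hTx hβ.1.1, hβ⟩,
      h.mono fun β hβ => ⟨hTx hβ.1, fun h' => hβ.2.2 h'.2⟩⟩⟩
  choose g hg using hfiber
  obtain ⟨D, hD, hdisj⟩ := not_isStatIn_iff.1 (not_isStatIn_diagUnion hγ hg)
  refine ⟨g, D, hD, fun β hβ b hb => ?_⟩
  by_contra hne
  exact disjoint_left.1 hdisj ⟨b, hb, hβ.1, hb, hne⟩ hβ.2

theorem IsStatIn.isStatIn_nonReflectingAt {x : Set γ} (hx : IsStatIn x) :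
    IsStatIn {β ∈ x | NonReflectingAt x β} := by
  intro C hC
  obtain ⟨β, ⟨hβx, hβC⟩, hmin⟩ :=
    wellFounded_lt.has_min (x ∩ accPts C) (hx _ (isClubIn_accPts hγ hC.2))
  refine ⟨β, ⟨hβx, C ∩ Iio β, inter_subset_right, fun b hb => ?_, fun α hαx hαβ hα => ?_⟩,
    hC.mem_of_mem_accPts hβC⟩
  · obtain ⟨d, hdC, hbd, hdβ⟩ := hβC.2 b hb
    exact ⟨d, ⟨hdC, hdβ⟩, hbd⟩
  · exact hmin α ⟨hαx, accPts_mono inter_subset_left hα⟩ hαβ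

theorem not_isStatIn_nonReflectingAt_of_forall_not_statSplits {x : Set γ} (hx : IsStatIn x)
    (hns : ∀ y, ¬ StatSplits y x) : ¬ IsStatIn {β ∈ x | NonReflectingAt x β} := by
  intro hT
  choose! L hLβ hLcof hLacc using fun β (hβ : β ∈ {β ∈ x | NonReflectingAt x β}) => hβ.2
  choose! G hGL hbG using hLcof
  obtain ⟨g, D, hD, hg⟩ := exists_isClubIn_forall_eq_of_forall_not_statSplits hγ hns
    (sep_subset _ _) hT G fun β hβ b hb => hLβ β hβ (hGL β hβ b hb)
  have hTD := hT.inter_club hγ hD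
  have hgt : ∀ b, b < g b := fun b => by
    obtain ⟨β, hβ, hbβ⟩ := hTD.exists_gt hγ b
    exact hg β hβ b hbβ ▸ hbG β hβ.1 b hbβ
  obtain ⟨α, hαx, hα⟩ :=
    hx _ (isClubIn_accPts hγ (s := range g) fun b => ⟨g b, ⟨b, rfl⟩, hgt b⟩)
  obtain ⟨β, hβ, hαβ⟩ := hTD.exists_gt hγ α
  refine hLacc β hβ.1 α hαx hαβ ⟨hα.1, fun b hb => ?_⟩
  obtain ⟨_, ⟨c, rfl⟩, hbc, hcα⟩ := hα.2 b hb
  have hcβ : c < β := ((hgt c).trans hcα).trans hαβ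
  exact ⟨g c, hg β hβ c hcβ ▸ hGL β hβ.1 c hcβ, hbc, hcα⟩

/-- Solovay's theorem. -/
theorem IsStatIn.exists_statSplits {x : Set γ} (hx : IsStatIn x) : ∃ y, StatSplits y x := by
  by_contra! hns
  exact not_isStatIn_nonReflectingAt_of_forall_not_statSplits hγ hx hns
    (hx.isStatIn_nonReflectingAt hγ)

end Solovay

/-- `X` is lexicographically below `Y`, and `d` is the first point where they differ. -/
structure IsFirstDiff (X Y : Set γ) (d : γ) : Prop where
  mem_right : d ∈ Y
  notMem_left : d ∉ X
  mem_iff_of_lt : ∀ e < d, e ∈ X ↔ e ∈ Y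

theorem IsFirstDiff.trans {X Y Z : Set γ} {d e : γ} (h₁ : IsFirstDiff X Y d)
    (h₂ : IsFirstDiff Y Z e) : IsFirstDiff X Z (min d e) := by
  rcases lt_trichotomy d e with hde | rfl | hed
  · rw [min_eq_left hde.le]
    exact ⟨(h₂.mem_iff_of_lt d hde).1 h₁.mem_right, h₁.notMem_left,
      fun f hf => (h₁.mem_iff_of_lt f hf).trans (h₂.mem_iff_of_lt f (hf.trans hde))⟩
  · exact absurd h₁.mem_right h₂.notMem_left
  · rw [min_eq_right hed.le]
    exact ⟨h₂.mem_right, fun hX => h₂.notMem_left ((h₁.mem_iff_of_lt e hed).1 hX),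
      fun f hf => (h₁.mem_iff_of_lt f (hf.trans hed)).trans (h₂.mem_iff_of_lt f hf)⟩

theorem IsFirstDiff.inter_Iio {X Y : Set γ} {d β : γ} (h : IsFirstDiff X Y d) (hd : d < β) :
    IsFirstDiff (X ∩ Iio β) (Y ∩ Iio β) d :=
  ⟨⟨h.mem_right, hd⟩, fun h' => h.notMem_left h'.1,
    fun e he => (h.mem_iff_of_lt e he).and Iff.rfl⟩

theorem IsFirstDiff.inter_Iio_eq {X Y : Set γ} {d β : γ} (h : IsFirstDiff X Y d) (hd : β ≤ d) :
    X ∩ Iio β = Y ∩ Iio β := by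
  ext e
  exact and_congr_left fun he => h.mem_iff_of_lt e (lt_of_lt_of_le he hd)

theorem IsFirstDiff.Iio_diff {X Y : Set γ} {d β : γ} (h : IsFirstDiff Y X d) (hX : X ⊆ Iio β) :
    IsFirstDiff (Iio β \ X) (Iio β \ Y) d :=
  ⟨⟨hX h.mem_right, h.notMem_left⟩, fun h' => h'.2 h.mem_right,
    fun e he => and_congr_right' (h.mem_iff_of_lt e he).symm.not⟩

def LexLE (X Y : Set γ) : Prop :=
  X = Y ∨ ∃ d, IsFirstDiff X Y d

theorem exists_isFirstDiff_of_not_lexLE [WellFoundedLT γ] {X Y : Set γ} (h : ¬ LexLE X Y) :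
    ∃ d, IsFirstDiff Y X d := by
  obtain ⟨d₀, hd₀⟩ : ∃ d, ¬ (d ∈ X ↔ d ∈ Y) := by
    by_contra! h'
    exact h (.inl (ext h'))
  obtain ⟨d, hd, hmin⟩ := wellFounded_lt.has_min {d | ¬ (d ∈ X ↔ d ∈ Y)} ⟨d₀, hd₀⟩
  have hbelow : ∀ e < d, e ∈ X ↔ e ∈ Y := fun e he => not_not.1 fun h' => hmin e h' he
  by_cases hdX : d ∈ X
  · exact ⟨d, hdX, fun hdY => hd (iff_of_true hdX hdY), fun e he => (hbelow e he).symm⟩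
  · exact absurd (.inr ⟨d, by simpa [hdX] using hd, hdX, hbelow⟩) h

def LexMonotoneOn (S : γ → Set γ) (H : Set γ) : Prop :=
  ∀ i ∈ H, ∀ j ∈ H, i < j → LexLE (S i) (S j ∩ Iio i)

theorem LexMonotoneOn.exists_isFirstDiff_le {S : γ → Set γ} {H : Set γ} (hS : LexMonotoneOn S H)
    {i j k d : γ} (hj : j ∈ H) (hk : k ∈ H) (hij : i < j) (hjk : j < k)
    (hd : IsFirstDiff (S i) (S j ∩ Iio i) d) : ∃ d' ≤ d, IsFirstDiff (S i) (S k ∩ Iio i) d' := by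
  have hrestrict : S k ∩ Iio j ∩ Iio i = S k ∩ Iio i := by
    rw [inter_assoc, Iio_inter_Iio, min_eq_right hij.le]
  rcases hS j hj k hk hjk with heq | ⟨e, he⟩
  · exact ⟨d, le_rfl, by rwa [heq, hrestrict] at hd⟩
  rcases lt_or_ge e i with hei | hie
  · exact ⟨min d e, min_le_left d e, hrestrict ▸ hd.trans (he.inter_Iio hei)⟩
  · exact ⟨d, le_rfl, by rwa [he.inter_Iio_eq hie, hrestrict] at hd⟩

theorem biUnion_inter_Iio_eq {S : γ → Set γ} {K : Set γ}
    (hK : ∀ i ∈ K, ∀ j ∈ K, i < j → S i = S j ∩ Iio i) (hS : ∀ a, S a ⊆ Iio a) {a : γ}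
    (ha : a ∈ K) : (⋃ i ∈ K, S i) ∩ Iio a = S a := by
  refine Subset.antisymm ?_ fun ξ hξ => ⟨mem_biUnion ha hξ, hS a hξ⟩
  rintro ξ ⟨hξ, hξa⟩
  obtain ⟨i, hi, hξi⟩ := mem_iUnion₂.1 hξ
  rcases lt_trichotomy i a with hia | rfl | hai
  · rw [hK i hi a ha hia] at hξi
    exact hξi.1
  · exact hξi
  · rw [hK a ha i hi hai]
    exact ⟨hξi, hξa⟩

section Coherence

variable [WellFoundedLT γ] (hγ : IsRegularUncountable γ)
include hγ

/-- Pressing down the least first difference of `S i` with a later `S j` leads to a first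
difference `δ` that lies both outside and inside some `S k`. -/
theorem LexMonotoneOn.not_isStatIn {S : γ → Set γ} {H : Set γ} (hS : LexMonotoneOn S H) :
    ¬ IsStatIn {i ∈ H | ∃ j ∈ H, i < j ∧ ∃ d, IsFirstDiff (S i) (S j ∩ Iio i) d} := by
  intro hB
  set B := {i ∈ H | ∃ j ∈ H, i < j ∧ ∃ d, IsFirstDiff (S i) (S j ∩ Iio i) d}
  set M : γ → Set γ := fun i => {d | ∃ j ∈ H, i < j ∧ IsFirstDiff (S i) (S j ∩ Iio i) d}
  have hμ : ∀ i ∈ B, ∃ m ∈ M i, ∀ d ∈ M i, ¬ d < m := fun i hi =>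
    wellFounded_lt.has_min _ (let ⟨j, hj, hij, d, hd⟩ := hi.2; ⟨d, j, hj, hij, hd⟩)
  choose! μ hμM hμmin using hμ
  have hμlt : ∀ i ∈ B, μ i < i := fun i hi => by
    obtain ⟨j, -, -, hd⟩ := hμM i hi
    exact hd.mem_right.2
  obtain ⟨δ, hδ⟩ := hB.exists_isStatIn_fiber hγ hμlt
  obtain ⟨i, hiB, hiδ⟩ := hδ.nonempty hγ
  obtain ⟨j, hj, hij, hdj⟩ := hμM i hiB
  obtain ⟨k, ⟨hkB, hkδ⟩, hjk⟩ := hδ.exists_gt hγ j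
  obtain ⟨l, -, -, hdl⟩ := hμM k hkB
  obtain ⟨d, hdμ, hd⟩ := hS.exists_isFirstDiff_le hj hkB.1 hij hjk hdj
  have hdeq : d = μ i := le_antisymm hdμ (not_lt.1 (hμmin i hiB d ⟨k, hkB.1, hij.trans hjk, hd⟩))
  rw [hkδ] at hdl
  rw [hdeq, hiδ] at hd
  exact hdl.notMem_left hd.mem_right.1

theorem LexMonotoneOn.exists_isStatIn_inter_Iio_eq {S : γ → Set γ} {H : Set γ}
    (hS : LexMonotoneOn S H) (hH : IsStatIn H) (hSsub : ∀ a, S a ⊆ Iio a) :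
    ∃ A, IsStatIn {a | A ∩ Iio a = S a} := by
  set K := H \ {i ∈ H | ∃ j ∈ H, i < j ∧ ∃ d, IsFirstDiff (S i) (S j ∩ Iio i) d}
  have hK : IsStatIn K := (hH.inter_or_sdiff hγ _).resolve_left fun h =>
    hS.not_isStatIn hγ (h.mono inter_subset_right)
  have hcoh : ∀ i ∈ K, ∀ j ∈ K, i < j → S i = S j ∩ Iio i := fun i hi j hj hij =>
    (hS i hi.1 j hj.1 hij).resolve_right fun ⟨d, hd⟩ => hi.2 ⟨hi.1, j, hj.1, hij, d, hd⟩
  exact ⟨⋃ i ∈ K, S i, hK.mono fun a ha => biUnion_inter_Iio_eq hcoh hSsub ha⟩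

/-- Ineffability in the sequence form of Jensen and Kunen. For the colour `false` the
complements `a \ S a` are lexicographically monotone. -/
theorem Ineffable.exists_isStatIn_inter_Iio_eq (hI : Ineffable γ) {S : γ → Set γ}
    (hS : ∀ a, S a ⊆ Iio a) : ∃ A, IsStatIn {a | A ∩ Iio a = S a} := by
  classical
  obtain ⟨H, hH, c, hc⟩ := hI fun i j => decide (LexLE (S i) (S j ∩ Iio i))
  cases c with
  | true =>
    exact LexMonotoneOn.exists_isStatIn_inter_Iio_eq hγ
      (fun i hi j hj hij => of_decide_eq_true (hc i hi j hj hij)) hH hS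
  | false =>
    have hmono : LexMonotoneOn (fun a => Iio a \ S a) H := fun i hi j hj hij => by
      obtain ⟨d, hd⟩ := exists_isFirstDiff_of_not_lexLE (of_decide_eq_false (hc i hi j hj hij))
      have hrestrict : Iio i \ (S j ∩ Iio i) = (Iio j \ S j) ∩ Iio i := by
        ext ξ
        simp only [mem_sdiff, mem_inter_iff, mem_Iio]
        exact ⟨fun h => ⟨⟨h.1.trans hij, fun hξ => h.2 ⟨hξ, h.1⟩⟩, h.1⟩,
          fun h => ⟨h.2, fun hξ => h.1.2 hξ.1⟩⟩
      exact .inr ⟨d, hrestrict ▸ hd.Iio_diff (hS i)⟩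
    obtain ⟨A, hA⟩ := hmono.exists_isStatIn_inter_Iio_eq hγ hH fun a => sdiff_subset
    refine ⟨Aᶜ, hA.mono fun a ha => ?_⟩
    change A ∩ Iio a = Iio a \ S a at ha
    change Aᶜ ∩ Iio a = S a
    rw [inter_comm, ← sdiff_eq, ← sdiff_inter_self_eq_sdiff, ha, sdiff_sdiff_cancel_left (hS a)]

end Coherence

theorem statSplittingNumber_le (S : Set (Set γ)) (hS : ∀ y ∈ S, IsStatIn y)
    (hsplit : ∀ x, IsStatIn x → ∃ y ∈ S, StatSplits y x) : statSplittingNumber γ ≤ #S :=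
  csInf_le' ⟨S, hS, hsplit, rfl⟩

theorem exists_statSplittingNumber_eq_mk {S₀ : Set (Set γ)} (hS₀ : ∀ y ∈ S₀, IsStatIn y)
    (hsplit₀ : ∀ x, IsStatIn x → ∃ y ∈ S₀, StatSplits y x) :
    ∃ S : Set (Set γ), (∀ x, IsStatIn x → ∃ y ∈ S, StatSplits y x) ∧
      statSplittingNumber γ = #S := by
  obtain ⟨S, -, hS, hc⟩ : statSplittingNumber γ ∈ _ := csInf_mem ⟨_, S₀, hS₀, hsplit₀, rfl⟩
  exact ⟨S, hS, hc⟩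

section SplittingNumber

variable [WellFoundedLT γ] (hγ : IsRegularUncountable γ)
include hγ

/-- A set split by no row `{a > b | f b a}` of `f` is, modulo a club, homogeneous for `f`
with colour `v i` at `i`; one of the two colours is then taken stationarily often. -/
theorem exists_statSplits_of_forall_not_homogeneous {f : γ → γ → Bool}
    (hf : ∀ x, IsStatIn x → ∀ c, ∃ i ∈ x, ∃ j ∈ x, i < j ∧ f i j ≠ c) {x : Set γ}
    (hx : IsStatIn x) : ∃ b, StatSplits {a | b < a ∧ f b a = true} x := by
  by_contra! h
  choose C hC v hv using fun b => exists_isClubIn_of_not_statSplits (h b)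
  have hhom : ∀ i ∈ x ∩ diagInter C, ∀ j ∈ x ∩ diagInter C, i < j → f i j = v i :=
    fun i _ j hj hij => by
      have := hv i j ⟨hj.1, hj.2 i hij⟩
      simp only [mem_ofPred_eq, hij, true_and] at this
      exact Bool.eq_iff_iff.2 this
  rcases (hx.inter_club hγ (isClubIn_diagInter hγ hC)).inter_or_sdiff hγ {i | v i = true}
    with hs | hs
  · obtain ⟨i, hi, j, hj, hij, hne⟩ := hf _ hs true
    exact hne ((hhom i hi.1 j hj.1 hij).trans hi.2)
  · obtain ⟨i, hi, j, hj, hij, hne⟩ := hf _ hs false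
    exact hne ((hhom i hi.1 j hj.1 hij).trans (by simpa using hi.2))

theorem statSplittingNumber_le_of_not_ineffable (h : ¬ Ineffable γ) :
    statSplittingNumber γ ≤ #γ := by
  rw [Ineffable] at h
  push Not at h
  obtain ⟨f, hf⟩ := h
  set y : γ → Set γ := fun b => {a | b < a ∧ f b a = true}
  have hsplit : ∀ x, IsStatIn x → ∃ s ∈ {s ∈ range y | IsStatIn s}, StatSplits s x := by
    intro x hx
    obtain ⟨b, hb⟩ := exists_statSplits_of_forall_not_homogeneous hγ hf hx
    exact ⟨y b, ⟨⟨b, rfl⟩, hb.1.mono inter_subset_right⟩, hb⟩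
  calc statSplittingNumber γ ≤ #{s ∈ range y | IsStatIn s} :=
        statSplittingNumber_le _ (fun s hs => hs.2) hsplit
    _ ≤ #(range y) := mk_le_mk_of_subset (sep_subset _ _)
    _ ≤ #γ := mk_range_le

/-- Enumerate a family of at most `κ` sets as `g`, and let `A` cohere with
`S a = {i < a | a ∈ g i}` on a stationary set `X`: then `X` lies, above `i`, inside `g i` if
`i ∈ A` and outside it if not. -/
theorem Ineffable.lt_mk_of_forall_statSplits (hI : Ineffable γ) {S : Set (Set γ)}
    (hS : ∀ x, IsStatIn x → ∃ y ∈ S, StatSplits y x) : #γ < #S := by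
  by_contra! hle
  obtain ⟨e⟩ := (le_def S γ).1 hle
  set g : γ → Set γ := Function.extend e Subtype.val fun _ => ∅
  obtain ⟨A, hA⟩ := hI.exists_isStatIn_inter_Iio_eq hγ (S := fun a => {i | i < a ∧ a ∈ g i})
    fun a i hi => hi.1
  obtain ⟨y, hyS, hsplit⟩ := hS _ hA
  have hy : g (e ⟨y, hyS⟩) = y := e.injective.extend_apply _ _ _
  set b := e ⟨y, hyS⟩
  have key : ∀ a ∈ {a | A ∩ Iio a = {i | i < a ∧ a ∈ g i}}, b < a → (b ∈ A ↔ a ∈ y) :=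
    fun a ha hba => by simpa [hba, hy] using Set.ext_iff.1 ha b
  by_cases hb : b ∈ A
  · exact not_isStatIn_of_subset_Iic hγ (b := b)
      (fun a ha => not_lt.1 fun hba => ha.2 ((key a ha.1 hba).1 hb)) hsplit.2
  · exact not_isStatIn_of_subset_Iic hγ (b := b)
      (fun a ha => not_lt.1 fun hba => hb ((key a ha.1 hba).2 ha.2)) hsplit.1

theorem lt_statSplittingNumber_of_ineffable (hI : Ineffable γ) : #γ < statSplittingNumber γ := by
  obtain ⟨S, hS, hc⟩ := exists_statSplittingNumber_eq_mk (S₀ := {y | IsStatIn y})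
    (fun y hy => hy) fun x hx =>
      (hx.exists_statSplits hγ).imp fun y hy => ⟨hy.1.mono inter_subset_right, hy⟩
  exact hc ▸ hI.lt_mk_of_forall_statSplits hγ hS

end SplittingNumber

end

/-- For a regular uncountable cardinal `κ`, the stationary splitting number satisfies
`s^cl_κ > κ` if and only if `κ` is ineffable. Here `κ` is represented as a well-ordered
type `α` of regular uncountable cardinality all of whose proper initial segments are of
size `< #α`. -/
theorem statSplittingNumber_gt_iff_ineffable {α : Type*} [LinearOrder α] [WellFoundedLT α]
    (hreg : (#α).IsRegular) (hunc : ℵ₀ < #α)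
    (hinit : ∀ a : α, #(Set.Iio a) < #α) :
    #α < statSplittingNumber α ↔ Ineffable α := by
  have hα : IsRegularUncountable α := ⟨hreg, hunc, hinit⟩
  exact ⟨fun h => by_contra fun hI => (statSplittingNumber_le_of_not_ineffable hα hI).not_gt h,
    lt_statSplittingNumber_of_ineffable hα⟩
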